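/- Let φ : ℝ³ → ℝ³ be the map φ(x,y,z) = (1/z, (1+z²)·y, x·z²/(1+z²)) and let θ_γ : ℝ³ → ℝ³ be θ_γ(x,y,z) = (y, x·z, x·z). Suppose x, y, z : (0,∞) → (0,∞) are families of positive reals and a, b > 0 are such that, as t → 0⁺, z(t) → 0, y(t) → a, and x(t)·z(t) → b. Then both θ_γ(x(t), y(t), z(t)) → (a, b, b) and θ_γ(φ(x(t), y(t), z(t))) → (a, b, b) as t → 0⁺. In particular the two limits agree, so the map induced by φ on the limiting pinched coordinates is the identity. -/

import Mathlib

/-!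
Pinching multiplies the first and third shear coordinates. After the twist these are `1 / z` and
`x z² / (1 + z²)`, whose product `x z / (1 + z²)` has the same limit `b` as `x z` since `z → 0`;
the middle coordinate `(1 + z²) y` likewise still tends to `a`.
-/

open Filter Topology

/-- The action `Φ_{T_γ,λ}` of the Dehn twist `T_γ` in shear coordinates `(x,y,z)`. -/
noncomputable def phi : ℝ × ℝ × ℝ → ℝ × ℝ × ℝ :=
  fun p => (1 / p.2.2, (1 + p.2.2 ^ 2) * p.2.1, p.1 * p.2.2 ^ 2 / (1 + p.2.2 ^ 2))

/-- The pinching map `Θ_{γ,λ}`. -/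
def thetaGamma : ℝ × ℝ × ℝ → ℝ × ℝ × ℝ :=
  fun p => (p.2.1, p.1 * p.2.2, p.1 * p.2.2)

lemma thetaGamma_phi (x y z : ℝ) :
    thetaGamma (phi (x, y, z)) =
      ((1 + z ^ 2) * y, x * z / (1 + z ^ 2), x * z / (1 + z ^ 2)) := by
  have hcancel : 1 / z * (x * z ^ 2 / (1 + z ^ 2)) = x * z / (1 + z ^ 2) := by
    rcases eq_or_ne z 0 with rfl | hz
    · simp
    · field_simp
  simp only [thetaGamma, phi, hcancel]

section Limits

variable {α : Type*} {l : Filter α} {x y z : α → ℝ} {a b : ℝ}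

lemma tendsto_thetaGamma (hy : Tendsto y l (𝓝 a)) (hxz : Tendsto (fun t => x t * z t) l (𝓝 b)) :
    Tendsto (fun t => thetaGamma (x t, y t, z t)) l (𝓝 (a, b, b)) :=
  hy.prodMk_nhds (hxz.prodMk_nhds hxz)

lemma tendsto_thetaGamma_phi (hz : Tendsto z l (𝓝 0)) (hy : Tendsto y l (𝓝 a))
    (hxz : Tendsto (fun t => x t * z t) l (𝓝 b)) :
    Tendsto (fun t => thetaGamma (phi (x t, y t, z t))) l (𝓝 (a, b, b)) := by
  have hden : Tendsto (fun t => 1 + z t ^ 2) l (𝓝 1) := by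
    simpa using tendsto_const_nhds.add (hz.pow 2)
  have hmid : Tendsto (fun t => (1 + z t ^ 2) * y t) l (𝓝 a) := by
    simpa using hden.mul hy
  have hside : Tendsto (fun t => x t * z t / (1 + z t ^ 2)) l (𝓝 b) := by
    rw [← div_one b]
    exact hxz.div hden one_ne_zero
  simp only [thetaGamma_phi]
  exact hmid.prodMk_nhds (hside.prodMk_nhds hside)

end Limits

theorem stmt2_general (x y z : ℝ → ℝ)
    (a b : ℝ)
    (hz : Tendsto z (𝓝[>] (0 : ℝ)) (𝓝 0))
    (hy : Tendsto y (𝓝[>] (0 : ℝ)) (𝓝 a))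
    (hxz : Tendsto (fun t => x t * z t) (𝓝[>] (0 : ℝ)) (𝓝 b)) :
    Tendsto (fun t => thetaGamma (x t, y t, z t)) (𝓝[>] (0 : ℝ)) (𝓝 (a, b, b)) ∧
    Tendsto (fun t => thetaGamma (phi (x t, y t, z t))) (𝓝[>] (0 : ℝ)) (𝓝 (a, b, b)) :=
  ⟨tendsto_thetaGamma hy hxz, tendsto_thetaGamma_phi hz hy hxz⟩

/-- If `z(t) → 0`, `y(t) → a`, `x(t)·z(t) → b` as `t → 0⁺` (with everything positive),
then both `θ_γ(x(t),y(t),z(t))` and `θ_γ(φ(x(t),y(t),z(t)))` tend to `(a,b,b)`;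
so the map induced by `φ` on the limiting pinched coordinates is the identity. -/
theorem stmt2 (x y z : ℝ → ℝ)
    (hxpos : ∀ t ∈ Set.Ioi (0 : ℝ), 0 < x t)
    (hypos : ∀ t ∈ Set.Ioi (0 : ℝ), 0 < y t)
    (hzpos : ∀ t ∈ Set.Ioi (0 : ℝ), 0 < z t)
    (a b : ℝ) (ha : 0 < a) (hb : 0 < b)
    (hz : Tendsto z (𝓝[>] (0 : ℝ)) (𝓝 0))
    (hy : Tendsto y (𝓝[>] (0 : ℝ)) (𝓝 a))
    (hxz : Tendsto (fun t => x t * z t) (𝓝[>] (0 : ℝ)) (𝓝 b)) :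
    Tendsto (fun t => thetaGamma (x t, y t, z t)) (𝓝[>] (0 : ℝ)) (𝓝 (a, b, b)) ∧
    Tendsto (fun t => thetaGamma (phi (x t, y t, z t))) (𝓝[>] (0 : ℝ)) (𝓝 (a, b, b)) :=
  stmt2_general x y z a b hz hy hxz
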